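/- For every positive integer n, ζ(2n) = lim_{q→∞} (π/(2q+1))^{2n} · Σ_{p=1}^{q} csc^{2n}(pπ/(2q+1)). -/

import Mathlib

/-! With `h = π / (2q + 1)` the `p`-th term is `(h / sin (p h))^(2n) = (p⁻¹ / sinc (p h))^(2n)`,
which tends to `1 / p^(2n)` as `q → ∞` because `sinc` is continuous with `sinc 0 = 1`. For `p ≤ q`
we have `p h ≤ π / 2`, so Jordan's inequality `sinc ≥ 2 / π` dominates the term by the summable
`(π / (2p))^(2n)`, and Tannery's theorem moves the limit inside the sum. -/

open Real Filter Finset Topology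

theorem tendsto_sum_range_of_dominated_convergence {G : Type*} [NormedAddCommGroup G]
    [CompleteSpace G] {f : ℕ → ℕ → G} {g : ℕ → G} {bound : ℕ → ℝ} (h_sum : Summable bound)
    (hab : ∀ k, Tendsto (f · k) atTop (𝓝 (g k)))
    (h_bound : ∀ q, ∀ k < q, ‖f q k‖ ≤ bound k) :
    Tendsto (fun q ↦ ∑ k ∈ range q, f q k) atTop (𝓝 (∑' k, g k)) := by
  let F : ℕ → ℕ → G := fun q k ↦ if k < q then f q k else 0
  have hF : ∀ q, ∑ k ∈ range q, f q k = ∑' k, F q k := fun q ↦ by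
    rw [tsum_eq_sum (s := range q) (fun k hk ↦ if_neg (by simpa using hk))]
    exact sum_congr rfl fun k hk ↦ (if_pos (mem_range.mp hk)).symm
  simp only [hF]
  refine tendsto_tsum_of_dominated_convergence h_sum (fun k ↦ ?_) (.of_forall fun q k ↦ ?_)
  · refine (hab k).congr' ?_
    filter_upwards [eventually_gt_atTop k] with q hq using (if_pos hq).symm
  · by_cases hk : k < q
    · simpa [F, hk] using h_bound q k hk
    · simpa [F, hk] using (norm_nonneg _).trans (h_bound (k + 1) k k.lt_succ_self)

theorem div_sin_mul_eq_inv_div_sinc {p h : ℝ} (hph : p * h ≠ 0) :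
    h / sin (p * h) = p⁻¹ / sinc (p * h) := by
  have hp : p ≠ 0 := left_ne_zero_of_mul hph
  rw [sinc_of_ne_zero hph]
  field_simp

theorem two_div_pi_le_sinc {x : ℝ} (hx : |x| ≤ π / 2) : 2 / π ≤ sinc x := by
  wlog hx₀ : 0 ≤ x
  · simpa using this (by rwa [abs_neg]) (neg_nonneg.2 (le_of_not_ge hx₀))
  rw [abs_of_nonneg hx₀] at hx
  rcases hx₀.eq_or_lt with rfl | hx₀
  · rw [sinc_zero, div_le_one pi_pos]
    linarith [pi_gt_three]
  · rw [sinc_of_ne_zero hx₀.ne', le_div_iff₀ hx₀]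
    exact mul_le_sin hx₀.le hx

theorem tendsto_div_sin_mul_nhdsNE_zero {p : ℝ} (hp : p ≠ 0) :
    Tendsto (fun h ↦ h / sin (p * h)) (𝓝[≠] 0) (𝓝 p⁻¹) := by
  have hsinc : Tendsto (fun h ↦ p⁻¹ / sinc (p * h)) (𝓝 0) (𝓝 p⁻¹) := by
    have h_sinc : Tendsto (fun h ↦ sinc (p * h)) (𝓝 0) (𝓝 1) :=
      (continuous_sinc.comp (continuous_const_mul p)).tendsto' 0 1 (by simp)
    simpa [div_eq_mul_inv] using (h_sinc.inv₀ one_ne_zero).const_mul p⁻¹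
  refine (hsinc.mono_left nhdsWithin_le_nhds).congr' ?_
  filter_upwards [self_mem_nhdsWithin] with h hh
  exact (div_sin_mul_eq_inv_div_sinc (mul_ne_zero hp hh)).symm

theorem abs_div_sin_mul_le {p h : ℝ} (hp : 0 < p) (hh : 0 < h) (hph : p * h ≤ π / 2) :
    |h / sin (p * h)| ≤ π / (2 * p) := by
  have hsinc := two_div_pi_le_sinc (x := p * h) (by rwa [abs_of_pos (by positivity)])
  have hsinc_pos : 0 < sinc (p * h) := hsinc.trans_lt' (by positivity)
  rw [div_sin_mul_eq_inv_div_sinc (by positivity), abs_of_pos (by positivity),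
    div_le_iff₀ hsinc_pos]
  calc p⁻¹ = π / (2 * p) * (2 / π) := by field_simp
    _ ≤ π / (2 * p) * sinc (p * h) := by gcongr

theorem tendsto_pi_div_two_mul_add_one_nhdsNE_zero :
    Tendsto (fun q : ℕ ↦ π / (2 * q + 1)) atTop (𝓝[≠] 0) := by
  refine tendsto_nhdsWithin_of_tendsto_nhds_of_eventually_within _ ?_ (.of_forall fun q ↦ ?_)
  · refine tendsto_const_nhds.div_atTop (tendsto_atTop_add_const_right _ 1 ?_)
    exact tendsto_natCast_atTop_atTop.const_mul_atTop two_pos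
  · exact (div_pos pi_pos (by positivity)).ne'

theorem sum_Icc_one_eq_sum_range {M : Type*} [AddCommMonoid M] (f : ℕ → M) (q : ℕ) :
    ∑ p ∈ Icc 1 q, f p = ∑ k ∈ range q, f (k + 1) := by
  rw [range_eq_Ico, sum_Ico_add' f 0 q 1, zero_add, Ico_add_one_right_eq_Icc]

theorem tendsto_sum_Icc_div_sin_pow {m : ℕ} (hm : 1 < m) :
    Tendsto (fun q : ℕ ↦ ∑ p ∈ Icc 1 q, (π / (2 * q + 1) / sin (p * (π / (2 * q + 1)))) ^ m)
      atTop (𝓝 (∑' k : ℕ, 1 / ((k : ℝ) + 1) ^ m)) := by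
  simp only [sum_Icc_one_eq_sum_range, Nat.cast_add_one]
  refine tendsto_sum_range_of_dominated_convergence
    (bound := fun k ↦ (π / (2 * ((k : ℝ) + 1))) ^ m) ?_ (fun k ↦ ?_) (fun q k hk ↦ ?_)
  · have h_zeta := (summable_nat_add_iff 1).2 (summable_one_div_nat_pow.2 hm)
    refine (h_zeta.mul_left ((π / 2) ^ m)).congr fun k ↦ ?_
    rw [Nat.cast_add_one, mul_one_div, ← div_pow, div_div]
  · have := ((tendsto_div_sin_mul_nhdsNE_zero (p := (k : ℝ) + 1) (by positivity)).comp
      tendsto_pi_div_two_mul_add_one_nhdsNE_zero).pow m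
    simpa [Function.comp_def, inv_pow] using this
  · have hkq : ((k : ℝ) + 1) * (π / (2 * q + 1)) ≤ π / 2 := by
      have : (k : ℝ) + 1 ≤ q := by exact_mod_cast hk
      rw [mul_div_assoc', div_le_div_iff₀ (by positivity) two_pos]
      nlinarith [pi_pos]
    rw [norm_pow, norm_eq_abs]
    exact pow_le_pow_left₀ (abs_nonneg _) (abs_div_sin_mul_le (by positivity) (by positivity) hkq) m

theorem zeta_even_csc_limit_2q1 (n : ℕ) (hn : 0 < n) :
    Tendsto (fun q : ℕ =>
        (π / (2 * q + 1)) ^ (2 * n) *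
          ∑ p ∈ Finset.Icc 1 q, ((Real.sin (p * π / (2 * q + 1)))⁻¹) ^ (2 * n))
      atTop (nhds (∑' k : ℕ, 1 / ((k : ℝ) + 1) ^ (2 * n))) := by
  convert tendsto_sum_Icc_div_sin_pow (m := 2 * n) (by omega) using 2 with q
  rw [mul_sum]
  refine sum_congr rfl fun p _ ↦ ?_
  rw [div_eq_mul_inv _ (sin _), mul_pow, mul_div_assoc]
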